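/- arXiv:2012.13401 — 2 statements merged into one kernel-verified Lean document; each statement's English description precedes it below -/
import Mathlib

section
/- Let K be a field of characteristic zero and n ≥ 2. The Killing form of the special linear Lie algebra sl(n, K) is given by κ(x, y) = 2n · trace(x · y) for all x, y ∈ sl(n, K). (Consequently, the defining representation of sl(n) has Dynkin index 1 with respect to the normalized invariant form trace(x·y).) -/
open LieAlgebra.SpecialLinear

attribute [local instance 100] LieRing.ofAssociativeRing

lemma repr_stdBasis_aux (K : Type*) [Field K] {m n : Type*} [Fintype m] [Fintype n]
    [DecidableEq m] [DecidableEq n] (M : Matrix m n K) (p : m × n) :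
    (Matrix.stdBasis K m n).repr M p = M p.1 p.2 := by
  have h : M = ∑ q : m × n, M q.1 q.2 • Matrix.stdBasis K m n q := by
    conv_lhs => rw [Matrix.matrix_eq_sum_single M]
    rw [Fintype.sum_prod_type]
    refine Finset.sum_congr rfl fun i _ ↦ Finset.sum_congr rfl fun j _ ↦ ?_
    rw [Matrix.stdBasis_eq_single, Matrix.smul_single, smul_eq_mul, mul_one]
  conv_lhs => rw [h]
  rw [Module.Basis.repr_sum_self]

lemma trace_ad_comp_ad_aux (K : Type*) [Field K] (n : ℕ) (x y : Matrix (Fin n) (Fin n) K) :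
    LinearMap.trace K (Matrix (Fin n) (Fin n) K)
      ((LieAlgebra.ad K (Matrix (Fin n) (Fin n) K) x) ∘ₗ
        (LieAlgebra.ad K (Matrix (Fin n) (Fin n) K) y))
    = 2 * n * Matrix.trace (x * y) - 2 * Matrix.trace x * Matrix.trace y := by
  rw [LinearMap.trace_eq_matrix_trace K (Matrix.stdBasis K (Fin n) (Fin n))]
  rw [Matrix.trace]
  have key : ∀ p : Fin n × Fin n,
      (LinearMap.toMatrix (Matrix.stdBasis K (Fin n) (Fin n)) (Matrix.stdBasis K (Fin n) (Fin n))
        ((LieAlgebra.ad K (Matrix (Fin n) (Fin n) K) x) ∘ₗ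
          (LieAlgebra.ad K (Matrix (Fin n) (Fin n) K) y))).diag p
      = (x*y) p.1 p.1 - x p.1 p.1 * y p.2 p.2 - y p.1 p.1 * x p.2 p.2 + (y*x) p.2 p.2 := by
    rintro ⟨i, j⟩
    rw [Matrix.diag, LinearMap.toMatrix_apply, repr_stdBasis_aux]
    rw [Matrix.stdBasis_eq_single]
    simp only [LinearMap.comp_apply, LieAlgebra.ad_apply, Ring.lie_def, mul_sub, sub_mul]
    simp [Matrix.mul_apply, Matrix.single, Matrix.of_apply, ite_and, Finset.mul_sum,
      Finset.sum_mul]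
    ring
  rw [Finset.sum_congr rfl (fun p _ ↦ key p)]
  rw [Fintype.sum_prod_type]
  simp only [Finset.sum_add_distrib, Finset.sum_sub_distrib, Finset.sum_const, Finset.card_univ,
    Fintype.card_fin, ← Finset.sum_mul, ← Finset.mul_sum, nsmul_eq_mul]
  have hc : ∑ i : Fin n, (y * x) i i = ∑ i : Fin n, (x * y) i i := by
    have := Matrix.trace_mul_comm y x
    simpa [Matrix.trace, Matrix.diag] using this
  rw [hc]
  simp only [Matrix.trace, Matrix.diag]
  ring

/-- The Killing form of `sl(n, K)` (char `K` = 0, `n ≥ 2`) is `κ(x, y) = 2n · tr(x·y)`. -/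
theorem killingForm_sl
    (K : Type*) [Field K] [CharZero K] (n : ℕ) (hn : 2 ≤ n)
    (x y : sl (Fin n) K) :
    killingForm K ↥(sl (Fin n) K) x y
      = (2 * n : K) * Matrix.trace ((x : Matrix (Fin n) (Fin n) K)
          * (y : Matrix (Fin n) (Fin n) K)) := by
  set gl := Matrix (Fin n) (Fin n) K
  set f := (LieAlgebra.ad K gl ↑x) ∘ₗ (LieAlgebra.ad K gl ↑y) with hfdef
  have hf : ∀ m, f m ∈ (sl (Fin n) K).toSubmodule := by
    intro m
    have h0 : Matrix.trace (f m) = 0 := by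
      simp only [hfdef, LinearMap.comp_apply, LieAlgebra.ad_apply]
      exact LieAlgebra.matrix_trace_commutator_zero _ _ _ _
    exact h0
  have hf' : ∀ m ∈ (sl (Fin n) K).toSubmodule, f m ∈ (sl (Fin n) K).toSubmodule :=
    fun m _ ↦ hf m
  have h1 : killingForm K ↥(sl (Fin n) K) x y = LinearMap.trace K gl f := by
    rw [← LinearMap.trace_restrict_eq_of_forall_mem _ f hf hf']
    rw [LieModule.traceForm_apply_apply]
    congr 1
  have hx : Matrix.trace (x : gl) = 0 := x.2
  rw [h1, hfdef, trace_ad_comp_ad_aux, hx]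
  ring
end

section
/- Let K be a field of characteristic zero and n ≥ 3. The Killing form of the orthogonal Lie algebra so(n, K) of skew-symmetric n×n matrices is given by κ(x, y) = (n − 2) · trace(x · y) for all x, y ∈ so(n, K). -/
open LieAlgebra.Orthogonal

open LinearMap Matrix

attribute [local instance 100] LieRing.ofAssociativeRing

section Aux


variable {K : Type*} [Field K] {n : ℕ}

lemma repr_stdBasis (m : Matrix (Fin n) (Fin n) K) (ij : Fin n × Fin n) :
    (Matrix.stdBasis K (Fin n) (Fin n)).repr m ij = m ij.1 ij.2 := by
  simp [Matrix.stdBasis, Pi.basis_repr]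

lemma trace_formula (f : Matrix (Fin n) (Fin n) K →ₗ[K] Matrix (Fin n) (Fin n) K) :
    trace K _ f = ∑ i : Fin n, ∑ j : Fin n, f (Matrix.single i j 1) i j := by
  rw [trace_eq_matrix_trace K (Matrix.stdBasis K (Fin n) (Fin n)), Matrix.trace]
  rw [← Fintype.sum_prod_type']
  refine Fintype.sum_congr _ _ fun ij => ?_
  rw [Matrix.diag_apply, LinearMap.toMatrix_apply, Matrix.stdBasis_eq_single,
    repr_stdBasis]

lemma trace_restrict_eq_trace_comp_proj
    {V : Type*} [AddCommGroup V] [Module K V] [Module.Finite K V]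
    (p : Submodule K V) (P : V →ₗ[K] V) (hP : LinearMap.IsProj p P)
    (F : V →ₗ[K] V) (hF : Set.MapsTo F p p) :
    trace K p (F.restrict hF) = trace K V (F ∘ₗ P) := by
  let π : V →ₗ[K] p := hP.codRestrict
  have h1 : F ∘ₗ P = p.subtype ∘ₗ ((F.restrict hF) ∘ₗ π) := by
    ext m
    simp [π, LinearMap.IsProj.codRestrict, LinearMap.restrict_coe_apply]
    rfl
  rw [h1, trace_comp_comm']
  have h2 : ((F.restrict hF) ∘ₗ π) ∘ₗ p.subtype = F.restrict hF := by
    ext z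
    have : π z = z := Subtype.ext (hP.map_id z z.2)
    simp [this]
  rw [h2]

lemma mul_std_mul (A B : Matrix (Fin n) (Fin n) K) (i j a b : Fin n) :
    (A * Matrix.single i j 1 * B : Matrix (Fin n) (Fin n) K) a b = A a i * B j b := by
  simp [Matrix.mul_apply, Matrix.single, ite_and, Finset.sum_mul, Finset.mul_sum]


end Aux

/-- The Killing form of the orthogonal Lie algebra `so(n, K)` of skew-symmetric matrices
(char `K` = 0, `n ≥ 3`) is `κ(x, y) = (n − 2) · tr(x·y)`. -/
theorem killingForm_so
    (K : Type*) [Field K] [CharZero K] (n : ℕ) (hn : 3 ≤ n)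
    (x y : so (Fin n) K) :
    killingForm K ↥(so (Fin n) K) x y
      = ((n : K) - 2) * Matrix.trace ((x : Matrix (Fin n) (Fin n) K)
          * (y : Matrix (Fin n) (Fin n) K)) := by
  have hxT : (x : Matrix (Fin n) (Fin n) K)ᵀ = -(x : Matrix (Fin n) (Fin n) K) :=
    (mem_so (Fin n) K _).mp x.2
  have hyT : (y : Matrix (Fin n) (Fin n) K)ᵀ = -(y : Matrix (Fin n) (Fin n) K) :=
    (mem_so (Fin n) K _).mp y.2
  -- the transpose map as a linear endomorphism
  let σ : Matrix (Fin n) (Fin n) K →ₗ[K] Matrix (Fin n) (Fin n) K :=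
    { toFun := Matrix.transpose
      map_add' := fun a b => Matrix.transpose_add a b
      map_smul' := fun c a => Matrix.transpose_smul c a }
  have hσ : ∀ m, σ m = mᵀ := fun m => rfl
  let p : Submodule K (Matrix (Fin n) (Fin n) K) := (so (Fin n) K).toSubmodule
  have hmem : ∀ m : Matrix (Fin n) (Fin n) K, m ∈ p ↔ mᵀ = -m := fun m => by
    rw [LieSubalgebra.mem_toSubmodule, mem_so]
  let P : Matrix (Fin n) (Fin n) K →ₗ[K] Matrix (Fin n) (Fin n) K :=
    (2:K)⁻¹ • (LinearMap.id - σ)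
  have hPapp : ∀ m, P m = (2:K)⁻¹ • (m - mᵀ) := fun m => rfl
  have hproj : LinearMap.IsProj p P := by
    constructor
    · intro m
      rw [hmem, hPapp, Matrix.transpose_smul, Matrix.transpose_sub,
        Matrix.transpose_transpose, ← smul_neg, neg_sub]
    · intro m hm
      rw [hmem] at hm
      rw [hPapp, hm, sub_neg_eq_add, smul_add, ← add_smul]
      norm_num
  let F : Matrix (Fin n) (Fin n) K →ₗ[K] Matrix (Fin n) (Fin n) K :=
    (LieAlgebra.ad K (Matrix (Fin n) (Fin n) K) (x : Matrix (Fin n) (Fin n) K)) ∘ₗ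
      (LieAlgebra.ad K (Matrix (Fin n) (Fin n) K) (y : Matrix (Fin n) (Fin n) K))
  have hFapp : ∀ m, F m = ⁅(x : Matrix (Fin n) (Fin n) K),
      ⁅(y : Matrix (Fin n) (Fin n) K), m⁆⁆ := fun m => rfl
  have hFmaps : Set.MapsTo F p p := by
    intro m hm
    rw [SetLike.mem_coe, hmem] at hm ⊢
    rw [hFapp]
    simp only [Ring.lie_def, Matrix.transpose_sub, Matrix.transpose_mul, hxT, hyT, hm]
    noncomm_ring
  -- Step 1: the Killing form is the trace of the restriction of F
  have step1 : killingForm K ↥(so (Fin n) K) x y = LinearMap.trace K p (F.restrict hFmaps) := by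
    rw [killingForm, LieModule.traceForm_apply_apply]
    congr 1
  rw [step1, trace_restrict_eq_trace_comp_proj p P hproj F hFmaps]
  -- diagonal entries of skew matrices vanish
  have hdiagx : ∀ i, (x : Matrix (Fin n) (Fin n) K) i i = 0 := by
    intro i
    have h := congrFun (congrFun hxT i) i
    rw [Matrix.transpose_apply, Matrix.neg_apply] at h
    linear_combination h / 2
  have hdiagy : ∀ i, (y : Matrix (Fin n) (Fin n) K) i i = 0 := by
    intro i
    have h := congrFun (congrFun hyT i) i
    rw [Matrix.transpose_apply, Matrix.neg_apply] at h
    linear_combination h / 2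
  -- split F ∘ P
  have hsplit : F ∘ₗ P = (2:K)⁻¹ • (F - F ∘ₗ σ) := by
    ext m
    simp only [LinearMap.comp_apply, hPapp, LinearMap.smul_apply, LinearMap.sub_apply,
      _root_.map_smul, map_sub, hσ]
  rw [hsplit, LinearMap.map_smul, LinearMap.map_sub, smul_eq_mul]
  -- trace of F on all matrices
  have hstdT : ∀ i j : Fin n, (Matrix.single i j (1:K))ᵀ = Matrix.single j i 1 := by
    intro i j
    ext a b
    simp [Matrix.single, Matrix.transpose_apply, and_comm]
  have t1 : ∑ i : Fin n, ((x : Matrix (Fin n) (Fin n) K) * (y : Matrix (Fin n) (Fin n) K)) i i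
      = Matrix.trace ((x : Matrix (Fin n) (Fin n) K) * (y : Matrix (Fin n) (Fin n) K)) := rfl
  have t2 : ∑ i : Fin n, ((y : Matrix (Fin n) (Fin n) K) * (x : Matrix (Fin n) (Fin n) K)) i i
      = Matrix.trace ((x : Matrix (Fin n) (Fin n) K) * (y : Matrix (Fin n) (Fin n) K)) := by
    rw [show ∑ i : Fin n, ((y : Matrix (Fin n) (Fin n) K) * (x : Matrix (Fin n) (Fin n) K)) i i
        = Matrix.trace ((y : Matrix (Fin n) (Fin n) K) * (x : Matrix (Fin n) (Fin n) K)) from rfl,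
      Matrix.trace_mul_comm]
  have htF : LinearMap.trace K _ F
      = (2 * n) * Matrix.trace ((x : Matrix (Fin n) (Fin n) K)
          * (y : Matrix (Fin n) (Fin n) K)) := by
    rw [trace_formula]
    have hent : ∀ i j : Fin n, F (Matrix.single i j 1) i j
        = ((x : Matrix (Fin n) (Fin n) K) * (y : Matrix (Fin n) (Fin n) K)) i i
          + ((y : Matrix (Fin n) (Fin n) K) * (x : Matrix (Fin n) (Fin n) K)) j j := by
      intro i j
      rw [hFapp]
      have expand : ⁅(x : Matrix (Fin n) (Fin n) K),
          ⁅(y : Matrix (Fin n) (Fin n) K), Matrix.single i j 1⁆⁆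
          = ((x : Matrix (Fin n) (Fin n) K) * (y : Matrix (Fin n) (Fin n) K))
              * Matrix.single i j 1 * 1
            - (x : Matrix (Fin n) (Fin n) K) * Matrix.single i j 1
              * (y : Matrix (Fin n) (Fin n) K)
            - (y : Matrix (Fin n) (Fin n) K) * Matrix.single i j 1
              * (x : Matrix (Fin n) (Fin n) K)
            + 1 * Matrix.single i j 1
              * ((y : Matrix (Fin n) (Fin n) K) * (x : Matrix (Fin n) (Fin n) K)) := by
        simp only [Ring.lie_def]
        noncomm_ring
      rw [expand]
      simp only [Matrix.add_apply, Matrix.sub_apply]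
      rw [mul_std_mul, mul_std_mul, mul_std_mul, mul_std_mul]
      simp only [hdiagx, hdiagy, Matrix.one_apply_eq]
      ring
    simp_rw [hent]
    simp only [Finset.sum_add_distrib, Finset.sum_const, Finset.card_univ,
      Fintype.card_fin, nsmul_eq_mul]
    rw [← Finset.mul_sum]
    rw [t1, t2]
    ring
  -- trace of F ∘ σ on all matrices
  have htFσ : LinearMap.trace K _ (F ∘ₗ σ)
      = 4 * Matrix.trace ((x : Matrix (Fin n) (Fin n) K)
          * (y : Matrix (Fin n) (Fin n) K)) := by
    rw [trace_formula]
    have hent : ∀ i j : Fin n, (F ∘ₗ σ) (Matrix.single i j 1) i j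
        = ((x : Matrix (Fin n) (Fin n) K) * (y : Matrix (Fin n) (Fin n) K)) i j
            * (1 : Matrix (Fin n) (Fin n) K) i j
          - (x : Matrix (Fin n) (Fin n) K) i j * (y : Matrix (Fin n) (Fin n) K) i j
          - (y : Matrix (Fin n) (Fin n) K) i j * (x : Matrix (Fin n) (Fin n) K) i j
          + (1 : Matrix (Fin n) (Fin n) K) i j
            * ((y : Matrix (Fin n) (Fin n) K) * (x : Matrix (Fin n) (Fin n) K)) i j := by
      intro i j
      rw [LinearMap.comp_apply, hσ, hstdT, hFapp]
      have expand : ⁅(x : Matrix (Fin n) (Fin n) K),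
          ⁅(y : Matrix (Fin n) (Fin n) K), Matrix.single j i 1⁆⁆
          = ((x : Matrix (Fin n) (Fin n) K) * (y : Matrix (Fin n) (Fin n) K))
              * Matrix.single j i 1 * 1
            - (x : Matrix (Fin n) (Fin n) K) * Matrix.single j i 1
              * (y : Matrix (Fin n) (Fin n) K)
            - (y : Matrix (Fin n) (Fin n) K) * Matrix.single j i 1
              * (x : Matrix (Fin n) (Fin n) K)
            + 1 * Matrix.single j i 1
              * ((y : Matrix (Fin n) (Fin n) K) * (x : Matrix (Fin n) (Fin n) K)) := by
        simp only [Ring.lie_def]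
        noncomm_ring
      rw [expand]
      simp only [Matrix.add_apply, Matrix.sub_apply]
      rw [mul_std_mul, mul_std_mul, mul_std_mul, mul_std_mul]
    simp_rw [hent]
    have s1 : ∑ i : Fin n, ∑ j : Fin n,
        ((x : Matrix (Fin n) (Fin n) K) * (y : Matrix (Fin n) (Fin n) K)) i j
          * (1 : Matrix (Fin n) (Fin n) K) i j
        = Matrix.trace ((x : Matrix (Fin n) (Fin n) K) * (y : Matrix (Fin n) (Fin n) K)) := by
      simp only [Matrix.one_apply, mul_ite, mul_one, mul_zero]
      simp only [Finset.sum_ite_eq, Finset.mem_univ, if_true]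
      exact t1
    have s4 : ∑ i : Fin n, ∑ j : Fin n,
        (1 : Matrix (Fin n) (Fin n) K) i j
          * ((y : Matrix (Fin n) (Fin n) K) * (x : Matrix (Fin n) (Fin n) K)) i j
        = Matrix.trace ((x : Matrix (Fin n) (Fin n) K) * (y : Matrix (Fin n) (Fin n) K)) := by
      simp only [Matrix.one_apply, ite_mul, one_mul, zero_mul]
      simp only [Finset.sum_ite_eq, Finset.mem_univ, if_true]
      exact t2
    have hyentry : ∀ i j : Fin n, (y : Matrix (Fin n) (Fin n) K) i j
        = -(y : Matrix (Fin n) (Fin n) K) j i := by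
      intro i j
      have h := congrFun (congrFun hyT j) i
      rw [Matrix.transpose_apply, Matrix.neg_apply] at h
      exact h
    have hxentry : ∀ i j : Fin n, (x : Matrix (Fin n) (Fin n) K) i j
        = -(x : Matrix (Fin n) (Fin n) K) j i := by
      intro i j
      have h := congrFun (congrFun hxT j) i
      rw [Matrix.transpose_apply, Matrix.neg_apply] at h
      exact h
    have s2 : ∑ i : Fin n, ∑ j : Fin n,
        (x : Matrix (Fin n) (Fin n) K) i j * (y : Matrix (Fin n) (Fin n) K) i j
        = - Matrix.trace ((x : Matrix (Fin n) (Fin n) K)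
            * (y : Matrix (Fin n) (Fin n) K)) := by
      have : ∀ i j : Fin n, (x : Matrix (Fin n) (Fin n) K) i j
          * (y : Matrix (Fin n) (Fin n) K) i j
          = -((x : Matrix (Fin n) (Fin n) K) i j * (y : Matrix (Fin n) (Fin n) K) j i) := by
        intro i j
        rw [hyentry i j]
        ring
      simp_rw [this]
      rw [← t1]
      simp only [← Finset.sum_neg_distrib]
      refine Finset.sum_congr rfl fun i _ => ?_
      simp [Matrix.mul_apply]
    have s3 : ∑ i : Fin n, ∑ j : Fin n,
        (y : Matrix (Fin n) (Fin n) K) i j * (x : Matrix (Fin n) (Fin n) K) i j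
        = - Matrix.trace ((x : Matrix (Fin n) (Fin n) K)
            * (y : Matrix (Fin n) (Fin n) K)) := by
      have : ∀ i j : Fin n, (y : Matrix (Fin n) (Fin n) K) i j
          * (x : Matrix (Fin n) (Fin n) K) i j
          = -((y : Matrix (Fin n) (Fin n) K) i j * (x : Matrix (Fin n) (Fin n) K) j i) := by
        intro i j
        rw [hxentry i j]
        ring
      simp_rw [this]
      rw [← t2]
      simp only [← Finset.sum_neg_distrib]
      refine Finset.sum_congr rfl fun i _ => ?_
      simp [Matrix.mul_apply]
    calc ∑ i : Fin n, ∑ j : Fin n, _ = _ := by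
          simp only [Finset.sum_add_distrib, Finset.sum_sub_distrib]
          rw [s1, s4, s2, s3]
      _ = 4 * Matrix.trace ((x : Matrix (Fin n) (Fin n) K)
            * (y : Matrix (Fin n) (Fin n) K)) := by ring
  rw [htF, htFσ]
  have h2 : (2:K) ≠ 0 := two_ne_zero
  field_simp
  ring
end
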